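/- Let m ∈ ℕ (m ≥ 1). Then ∑_{i=−∞}^{∞} Φ(x − i) = 1 for every x ∈ ℝ. -/

import Mathlib

/-!
Write `φ` for `phi m`. It is odd and increasing with limits `∓1` at `∓∞`, since for `x ≥ 0`,
`φ x = (1 - (1 + x^(2m))⁻¹)^(1/(2m))`. The series `∑ Φ(x + i)` telescopes with step two: it is
the series of increments of the increasing sequence `i ↦ φ(x + i) + φ(x + i - 1)`, whose limits
are `∓2`, so it sums to `(2 - (-2)) / 4 = 1`.
-/

open scoped BigOperators Topology
open Real Filter

/-- The algebraic sigmoid function `φ(x) = x / (1 + x^(2m))^(1/(2m))`. -/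
noncomputable def phi (m : ℕ) (x : ℝ) : ℝ :=
  x / (1 + x ^ (2 * m)) ^ ((1 : ℝ) / (2 * m))

/-- The activation function `Φ(x) = (φ(x+1) - φ(x-1))/4`. -/
noncomputable def Phi (m : ℕ) (x : ℝ) : ℝ :=
  (phi m (x + 1) - phi m (x - 1)) / 4

theorem Monotone.hasSum_add_one_sub {u : ℤ → ℝ} {a b : ℝ} (hu : Monotone u)
    (hbot : Tendsto u atBot (𝓝 a)) (htop : Tendsto u atTop (𝓝 b)) :
    HasSum (fun i => u (i + 1) - u i) (b - a) := by
  -- nonnegative terms: convergence of the partial sums over `ℕ` is unconditional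
  have hnonneg : ∀ i, 0 ≤ u (i + 1) - u i := fun i => sub_nonneg.2 (hu (Int.le_add_one le_rfl))
  have hnat : HasSum (fun n : ℕ => u (n + 1) - u n) (b - u 0) := by
    rw [hasSum_iff_tendsto_nat_of_nonneg (fun n => hnonneg n)]
    have hpartial (N : ℕ) : ∑ n ∈ Finset.range N, (u (n + 1) - u n) = u N - u 0 := by
      exact_mod_cast Finset.sum_range_sub (fun n : ℕ => u n) N
    simp only [hpartial]
    exact (htop.comp tendsto_natCast_atTop_atTop).sub_const _
  have hneg : HasSum (fun n : ℕ => u (-(n + 1) + 1) - u (-(n + 1))) (u 0 - a) := by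
    rw [hasSum_iff_tendsto_nat_of_nonneg (fun n => hnonneg _)]
    have hpartial (N : ℕ) :
        ∑ n ∈ Finset.range N, (u (-(n + 1) + 1) - u (-(n + 1))) = u 0 - u (-N) := by
      simpa using Finset.sum_range_sub' (fun n : ℕ => u (-n)) N
    simp only [hpartial]
    exact (hbot.comp (tendsto_neg_atTop_atBot.comp tendsto_natCast_atTop_atTop)).const_sub _
  simpa using HasSum.of_nat_of_neg_add_one (f := fun i => u (i + 1) - u i) hnat hneg

theorem Monotone.hasSum_add_intCast_sub {g : ℝ → ℝ} {a b : ℝ} (hg : Monotone g)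
    (hbot : Tendsto g atBot (𝓝 a)) (htop : Tendsto g atTop (𝓝 b)) (x : ℝ) :
    HasSum (fun i : ℤ => g (x + i + 1) - g (x + i - 1)) (2 * (b - a)) := by
  set u : ℤ → ℝ := fun i => g (x + i) + g (x + i - 1)
  have hu : Monotone u := fun i j hij => by
    have hcast : (i : ℝ) ≤ j := by exact_mod_cast hij
    exact add_le_add (hg (by linarith)) (hg (by linarith))
  have hshift_bot : Tendsto (fun i : ℤ => x + i) atBot atBot :=
    tendsto_atBot_add_const_left _ x (tendsto_intCast_atBot_iff.2 tendsto_id)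
  have hshift_top : Tendsto (fun i : ℤ => x + i) atTop atTop :=
    tendsto_atTop_add_const_left _ x tendsto_intCast_atTop_atTop
  have hsum := hu.hasSum_add_one_sub
    ((hbot.comp hshift_bot).add (hbot.comp (tendsto_atBot_add_const_right _ (-1) hshift_bot)))
    ((htop.comp hshift_top).add (htop.comp (tendsto_atTop_add_const_right _ (-1) hshift_top)))
  rw [show b + b - (a + a) = 2 * (b - a) by ring] at hsum
  refine hsum.congr_fun fun i => ?_
  simp only [u, Int.cast_add, Int.cast_one]
  ring_nf

lemma one_add_pow_two_mul_pos (m : ℕ) (x : ℝ) : 0 < 1 + x ^ (2 * m) := by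
  linarith [(even_two_mul m).pow_nonneg x]

lemma phi_neg (m : ℕ) (x : ℝ) : phi m (-x) = -phi m x := by
  rw [phi, phi, (even_two_mul m).neg_pow, neg_div]

lemma phi_of_nonneg {m : ℕ} (hm : 0 < m) {x : ℝ} (hx : 0 ≤ x) :
    phi m x = (1 - (1 + x ^ (2 * m))⁻¹) ^ ((1 : ℝ) / (2 * m)) := by
  have hpos := one_add_pow_two_mul_pos m x
  have hexp : (1 : ℝ) / (2 * m) = ((2 * m : ℕ) : ℝ)⁻¹ := by push_cast; rw [one_div]
  rw [show 1 - (1 + x ^ (2 * m))⁻¹ = x ^ (2 * m) / (1 + x ^ (2 * m)) by field_simp; ring,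
    phi, hexp, div_rpow (by positivity) hpos.le, pow_rpow_inv_natCast hx (by omega)]

lemma phi_monotone {m : ℕ} (hm : 0 < m) : Monotone (phi m) := by
  refine monotone_of_odd_of_monotoneOn_nonneg (phi_neg m) fun x hx y hy hxy => ?_
  have hx1 : 1 ≤ 1 + x ^ (2 * m) := le_add_of_nonneg_right ((even_two_mul m).pow_nonneg x)
  rw [phi_of_nonneg hm hx, phi_of_nonneg hm hy]
  refine rpow_le_rpow (sub_nonneg.2 (inv_le_one_of_one_le₀ hx1)) ?_ (by positivity)
  gcongr

lemma tendsto_phi_atTop {m : ℕ} (hm : 0 < m) : Tendsto (phi m) atTop (𝓝 1) := by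
  have hbase : Tendsto (fun x : ℝ => 1 - (1 + x ^ (2 * m))⁻¹) atTop (𝓝 1) := by
    simpa using tendsto_const_nhds.sub (tendsto_atTop_add_const_left atTop (1 : ℝ)
      (tendsto_pow_atTop (α := ℝ) (by omega : 2 * m ≠ 0))).inv_tendsto_atTop
  have hlim := hbase.rpow_const (p := (1 : ℝ) / (2 * m)) (Or.inl one_ne_zero)
  rw [one_rpow] at hlim
  refine hlim.congr' ?_
  filter_upwards [eventually_ge_atTop 0] with x hx
  exact (phi_of_nonneg hm hx).symm

lemma tendsto_phi_atBot {m : ℕ} (hm : 0 < m) : Tendsto (phi m) atBot (𝓝 (-1)) := by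
  have := ((tendsto_phi_atTop hm).comp tendsto_neg_atBot_atTop).neg
  simpa [Function.comp_def, phi_neg] using this

theorem Phi_tsum_eq_one (m : ℕ) (hm : 1 ≤ m) (x : ℝ) :
    ∑' i : ℤ, Phi m (x - i) = 1 := by
  have hsum : HasSum (fun i : ℤ => Phi m (x + i)) 1 := by
    have h := ((phi_monotone hm).hasSum_add_intCast_sub (tendsto_phi_atBot hm)
      (tendsto_phi_atTop hm) x).div_const 4
    rw [show 2 * (1 - -1 : ℝ) / 4 = 1 by norm_num] at h
    exact h
  rw [← tsum_comp_neg]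
  simpa [← sub_eq_add_neg] using hsum.tsum_eq
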